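/- Let (ε_{j,k})_{(j,k)∈ℤ²} be a family of independent standard Gaussian random variables. For s ∈ ℝ and j ∈ ℕ set τ_j(s) = max{ |ε_{j,k}| : k ∈ ℤ, |s − 2^{−j}k| ≤ j·2^{1−j} }. Then there is an event of probability 1 on which, for every s ∈ ℝ, liminf_{j→+∞} τ_j(s) ≥ 1/4. -/

import Mathlib

open MeasureTheory ProbabilityTheory Filter Set
open scoped ENNReal NNReal

noncomputable section

/-- `τ_j(s,ω) = max{|ε_{j,k}(ω)| : k ∈ ℤ, |s − 2^{−j}k| ≤ j·2^{1−j}}`. -/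
def tauMax {Ω : Type*} (e : ℤ × ℤ → Ω → ℝ) (j : ℕ) (s : ℝ) (ω : Ω) : ℝ :=
  sSup {x : ℝ | ∃ k : ℤ, |s - (2:ℝ) ^ (-(j : ℤ)) * (k : ℝ)| ≤ (j : ℝ) * (2:ℝ) ^ (1 - (j : ℤ))
    ∧ x = |e ((j : ℤ), k) ω|}

namespace LiminfTauAux

variable {Ω : Type*} [MeasurableSpace Ω]

/-- The interval `(-1/4, 1/4)`. -/
def Iq : Set ℝ := Set.Ioo (-(1/4)) (1/4)

lemma measurableSet_Iq : MeasurableSet Iq := measurableSet_Ioo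

/-- The block of `2j` consecutive integers starting at `2jm`. -/
def block (j : ℕ) (m : ℤ) : Finset ℤ :=
  Finset.Ico (2*(j:ℤ)*m) (2*(j:ℤ)*m + 2*(j:ℤ))

lemma card_block (j : ℕ) (m : ℤ) : (block j m).card = 2*j := by
  rw [block, Int.card_Ico]
  omega

/-- Event: all variables in block `m` at level `j` are small. -/
def C (e : ℤ × ℤ → Ω → ℝ) (j : ℕ) (m : ℤ) : Set Ω :=
  ⋂ k ∈ block j m, e ((j:ℤ), k) ⁻¹' Iq

def Mbd (N j : ℕ) : ℤ := ((N:ℤ)+1) * 2^j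

/-- Bad event at level `j` for the window `[-N, N]`. -/
def B (e : ℤ × ℤ → Ω → ℝ) (N j : ℕ) : Set Ω :=
  ⋃ m ∈ Finset.Icc (-(Mbd N j)) (Mbd N j), C e j m

lemma sqrt_two_pi_ge_two : (2:ℝ) ≤ Real.sqrt (2*Real.pi) := by
  rw [Real.le_sqrt' (by norm_num)]
  nlinarith [Real.pi_gt_three]

lemma gaussianPDFReal_le_half (x : ℝ) : gaussianPDFReal 0 1 x ≤ 1/2 := by
  have h1 := sqrt_two_pi_ge_two
  have h2 : Real.exp (-(x-0)^2/(2*1)) ≤ 1 := by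
    rw [Real.exp_le_one_iff]
    have : (0:ℝ) ≤ (x-0)^2 := sq_nonneg _
    linarith
  have h3 : (0:ℝ) < Real.sqrt (2*Real.pi) := by linarith
  have h4 : (Real.sqrt (2*Real.pi))⁻¹ ≤ 1/2 := by
    rw [inv_le_iff_one_le_mul₀ h3] <;> nlinarith
  have h5 : (0:ℝ) < Real.exp (-(x-0)^2/(2*1)) := Real.exp_pos _
  calc gaussianPDFReal 0 1 x
      = (Real.sqrt (2*Real.pi*(1:ℝ≥0)))⁻¹ * Real.exp (-(x-0)^2/(2*(1:ℝ≥0))) := rfl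
    _ ≤ (1/2) * 1 := by
        push_cast
        exact mul_le_mul (by simpa using h4) (by simpa using h2) (le_of_lt (by simpa using h5))
          (by norm_num)
    _ = 1/2 := by ring

lemma gaussian_Iq_le : gaussianReal 0 1 Iq ≤ 4⁻¹ := by
  rw [gaussianReal_apply 0 (by norm_num : (1:ℝ≥0) ≠ 0) Iq]
  calc ∫⁻ x in Iq, gaussianPDF 0 1 x
      ≤ ∫⁻ _ in Iq, 2⁻¹ ∂volume := by
        refine lintegral_mono fun x => ?_
        rw [gaussianPDF]
        rw [show (2⁻¹:ℝ≥0∞) = ENNReal.ofReal (1/2) by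
          rw [one_div, ENNReal.ofReal_inv_of_pos (by norm_num), ENNReal.ofReal_ofNat]]
        exact ENNReal.ofReal_le_ofReal (gaussianPDFReal_le_half x)
    _ = 2⁻¹ * volume Iq := setLIntegral_const Iq 2⁻¹
    _ = 2⁻¹ * 2⁻¹ := by
        rw [Iq, Real.volume_Ioo]
        norm_num
        rw [one_div, ENNReal.ofReal_inv_of_pos (by norm_num), ENNReal.ofReal_ofNat]
    _ = 4⁻¹ := by
        rw [← ENNReal.mul_inv (by norm_num) (by norm_num)]
        norm_num

variable (P : Measure Ω) [IsProbabilityMeasure P]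
variable (e : ℤ × ℤ → Ω → ℝ)

lemma measure_preimage_Iq_le (hmeas : ∀ jk, Measurable (e jk))
    (hgauss : ∀ jk, Measure.map (e jk) P = gaussianReal 0 1) (jk : ℤ × ℤ) :
    P (e jk ⁻¹' Iq) ≤ 4⁻¹ := by
  rw [← Measure.map_apply (hmeas jk) measurableSet_Iq, hgauss jk]
  exact gaussian_Iq_le

lemma measure_C_le (hmeas : ∀ jk, Measurable (e jk))
    (hindep : iIndepFun e P)
    (hgauss : ∀ jk, Measure.map (e jk) P = gaussianReal 0 1) (j : ℕ) (m : ℤ) :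
    P (C e j m) ≤ (4⁻¹ : ℝ≥0∞) ^ (2*j) := by
  classical
  set S : Finset (ℤ × ℤ) := (block j m).image (fun k => ((j:ℤ), k)) with hS
  have hinj : ∀ k ∈ block j m, ∀ k' ∈ block j m,
      ((j:ℤ), k) = ((j:ℤ), k') → k = k' := by
    intro k _ k' _ h
    simpa using h
  have hset : (⋂ i ∈ S, e i ⁻¹' Iq) = C e j m := by
    rw [C]
    ext ω
    simp only [Set.mem_iInter, hS, Finset.mem_image]
    constructor
    · intro h k hk
      exact h _ ⟨k, hk, rfl⟩
    · rintro h i ⟨k, hk, rfl⟩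
      exact h k hk
  have hprod := hindep.measure_inter_preimage_eq_mul S
    (sets := fun _ => Iq) (fun i _ => measurableSet_Iq)
  rw [hset] at hprod
  rw [hprod, Finset.prod_image hinj]
  calc ∏ k ∈ block j m, P (e ((j:ℤ), k) ⁻¹' Iq)
      ≤ ∏ _k ∈ block j m, (4⁻¹ : ℝ≥0∞) :=
        Finset.prod_le_prod' fun k _ => measure_preimage_Iq_le P e hmeas hgauss _
    _ = (4⁻¹ : ℝ≥0∞) ^ (2*j) := by rw [Finset.prod_const, card_block]

lemma measure_B_le (hmeas : ∀ jk, Measurable (e jk))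
    (hindep : iIndepFun e P)
    (hgauss : ∀ jk, Measure.map (e jk) P = gaussianReal 0 1) (N j : ℕ) :
    P (B e N j) ≤ (4*((N:ℝ≥0∞)+1)) * 8⁻¹ ^ j := by
  have hcard : (Finset.Icc (-(Mbd N j)) (Mbd N j)).card ≤ 4*(N+1)*2^j := by
    rw [Int.card_Icc, Mbd]
    have h1 : (1:ℤ) ≤ 2^j := one_le_pow₀ (by norm_num)
    rw [Int.toNat_le]
    push_cast
    nlinarith [h1, (by positivity : (0:ℤ) ≤ ((N:ℤ)+1) * 2^j)]
  calc P (B e N j)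
      ≤ ∑ m ∈ Finset.Icc (-(Mbd N j)) (Mbd N j), P (C e j m) :=
        measure_biUnion_finset_le _ _
    _ ≤ (Finset.Icc (-(Mbd N j)) (Mbd N j)).card • ((4⁻¹ : ℝ≥0∞) ^ (2*j)) :=
        Finset.sum_le_card_nsmul _ _ _ fun m _ => measure_C_le P e hmeas hindep hgauss j m
    _ = ((Finset.Icc (-(Mbd N j)) (Mbd N j)).card : ℝ≥0∞) * ((4⁻¹ : ℝ≥0∞) ^ (2*j)) := by
        rw [nsmul_eq_mul]
    _ ≤ ((4*(N+1)*2^j : ℕ) : ℝ≥0∞) * ((4⁻¹ : ℝ≥0∞) ^ (2*j)) :=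
        mul_le_mul_left (by exact_mod_cast hcard) _
    _ = (4*((N:ℝ≥0∞)+1)) * (2^j * (4⁻¹ : ℝ≥0∞) ^ (2*j)) := by
        push_cast
        ring
    _ = (4*((N:ℝ≥0∞)+1)) * 8⁻¹ ^ j := by
        congr 1
        rw [pow_mul, ← mul_pow]
        congr 1
        rw [show ((4:ℝ≥0∞)⁻¹)^2 = 16⁻¹ by rw [← ENNReal.inv_pow]; norm_num]
        rw [show (16:ℝ≥0∞) = 2*8 by norm_num, ENNReal.mul_inv (by norm_num) (by norm_num),
          ← mul_assoc, ENNReal.mul_inv_cancel (by norm_num) (by norm_num), one_mul]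

lemma tsum_B_ne_top (hmeas : ∀ jk, Measurable (e jk))
    (hindep : iIndepFun e P)
    (hgauss : ∀ jk, Measure.map (e jk) P = gaussianReal 0 1) (N : ℕ) :
    ∑' j : ℕ, P (B e N j) ≠ ∞ := by
  have hb : ∑' j : ℕ, P (B e N j) ≤ (4*((N:ℝ≥0∞)+1)) * ∑' j : ℕ, (8⁻¹:ℝ≥0∞) ^ j := by
    rw [← ENNReal.tsum_mul_left]
    exact ENNReal.tsum_le_tsum fun j => measure_B_le P e hmeas hindep hgauss N j
  refine ne_top_of_le_ne_top ?_ hb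
  rw [ENNReal.tsum_geometric]
  refine ENNReal.mul_ne_top ?_ ?_
  · refine ENNReal.mul_ne_top (by norm_num) ?_
    exact ENNReal.add_ne_top.2 ⟨ENNReal.natCast_ne_top N, by norm_num⟩
  · rw [Ne, ENNReal.inv_eq_top, tsub_eq_zero_iff_le]
    intro h
    have : (8⁻¹:ℝ≥0∞) < 1 := ENNReal.inv_lt_one.2 (by norm_num)
    exact absurd (lt_of_le_of_lt h this) (lt_irrefl _)

end LiminfTauAux

open LiminfTauAux

/-- For a family of independent standard Gaussian random variables `(ε_{j,k})`, there
is an event of probability 1 on which, for every `s ∈ ℝ`,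
`liminf_{j→∞} τ_j(s) ≥ 1/4`. -/
theorem liminf_tauMax_ge_quarter
    {Ω : Type*} [MeasurableSpace Ω] (P : Measure Ω) [IsProbabilityMeasure P]
    (e : ℤ × ℤ → Ω → ℝ) (hmeas : ∀ jk, Measurable (e jk))
    (hindep : iIndepFun e P)
    (hgauss : ∀ jk, Measure.map (e jk) P = gaussianReal 0 1) :
    ∃ E : Set Ω, P E = 1 ∧ ∀ ω ∈ E, ∀ s : ℝ,
      ENNReal.ofReal (1 / 4)
        ≤ Filter.liminf (fun j : ℕ => ENNReal.ofReal (tauMax e j s ω)) atTop := by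
  refine ⟨⋂ N : ℕ, (limsup (fun j => B e N j) atTop)ᶜ, ?_, ?_⟩
  · -- probability one
    have hnull : ∀ N : ℕ, P (limsup (fun j => B e N j) atTop) = 0 := fun N =>
      measure_limsup_atTop_eq_zero (tsum_B_ne_top P e hmeas hindep hgauss N)
    have hcompl : (⋂ N : ℕ, (limsup (fun j => B e N j) atTop)ᶜ)ᶜ
        = ⋃ N : ℕ, limsup (fun j => B e N j) atTop := by
      simp [Set.compl_iInter]
    have : P ((⋂ N : ℕ, (limsup (fun j => B e N j) atTop)ᶜ)ᶜ) = 0 := by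
      rw [hcompl]
      exact measure_iUnion_null hnull
    have heq : (⋂ N : ℕ, (limsup (fun j => B e N j) atTop)ᶜ) =ᵐ[P] (Set.univ : Set Ω) :=
      ae_eq_univ.2 this
    rw [measure_congr heq, measure_univ]
  · -- pointwise liminf bound
    intro ω hω s
    set N : ℕ := ⌈|s|⌉₊ with hN
    have hsN : |s| ≤ N := Nat.le_ceil _
    have hωN : ω ∈ (limsup (fun j => B e N j) atTop)ᶜ := Set.mem_iInter.1 hω N
    have hev : ∀ᶠ j in atTop, ω ∉ B e N j := by
      rw [Set.mem_compl_iff, mem_limsup_iff_frequently_mem] at hωN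
      exact not_frequently.1 hωN
    refine le_liminf_of_le (by isBoundedDefault) ?_
    filter_upwards [hev, eventually_ge_atTop 1] with j hj hj1
    refine ENNReal.ofReal_le_ofReal ?_
    -- real-side: 1/4 ≤ tauMax e j s ω
    have hJ : (1:ℝ) ≤ (j:ℝ) := by exact_mod_cast hj1
    set t : ℝ := (2:ℝ) ^ (j:ℤ) with ht
    have ht0 : (0:ℝ) < t := by positivity
    have ht1 : (1:ℝ) ≤ t := one_le_zpow₀ (by norm_num) (by positivity)
    set c : ℝ := (2:ℝ) ^ (-(j:ℤ)) with hc
    have hct : c * t = 1 := by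
      rw [hc, ht, ← zpow_add₀ (by norm_num : (2:ℝ) ≠ 0)]
      simp
    have hc0 : (0:ℝ) < c := by positivity
    have h2j : (0:ℝ) < 2*(j:ℝ) := by linarith
    set m : ℤ := ⌈(s * t - 2*(j:ℝ)) / (2*(j:ℝ))⌉ with hm
    have hm1 : s * t - 2*(j:ℝ) ≤ 2*(j:ℝ) * m := by
      have := Int.le_ceil ((s * t - 2*(j:ℝ)) / (2*(j:ℝ)))
      rw [div_le_iff₀ h2j] at this
      linarith
    have hm2 : 2*(j:ℝ) * m ≤ s * t := by
      have hlt := Int.ceil_lt_add_one ((s * t - 2*(j:ℝ)) / (2*(j:ℝ)))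
      rw [← hm] at hlt
      have hq : 2*(j:ℝ)*((s * t - 2*(j:ℝ)) / (2*(j:ℝ))) = s * t - 2*(j:ℝ) := by
        field_simp
      nlinarith [hlt, h2j]
    have hN0 : (0:ℝ) ≤ (N:ℝ) := Nat.cast_nonneg N
    have hsle : s * t ≤ (N:ℝ) * t := by nlinarith [le_abs_self s]
    have hsge : -((N:ℝ) * t) ≤ s * t := by nlinarith [neg_abs_le s]
    have hMb : ((Mbd N j : ℤ) : ℝ) = ((N:ℝ)+1) * t := by
      rw [Mbd, ht, zpow_natCast]
      push_cast
      ring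
    have hmem : m ∈ Finset.Icc (-(Mbd N j)) (Mbd N j) := by
      rw [Finset.mem_Icc]
      have hub : (m:ℝ) ≤ ((Mbd N j : ℤ) : ℝ) := by
        rw [hMb]
        nlinarith [hm2, hsle, ht0, ht1, hJ, hN0, mul_nonneg hN0 ht0.le]
      have hlb : ((-(Mbd N j) : ℤ) : ℝ) ≤ (m:ℝ) := by
        rw [Int.cast_neg, hMb]
        nlinarith [hm1, hsge, ht0, ht1, hJ, hN0, mul_nonneg hN0 ht0.le]
      exact ⟨by exact_mod_cast hlb, by exact_mod_cast hub⟩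
    have hnC : ω ∉ C e j m := fun hωC => hj (Set.mem_iUnion₂.2 ⟨m, hmem, hωC⟩)
    rw [C] at hnC
    simp only [Set.mem_iInter, not_forall] at hnC
    obtain ⟨k, hkblock, hkout⟩ := hnC
    rw [block, Finset.mem_Ico] at hkblock
    have hk1r : 2*(j:ℝ) * m ≤ (k:ℝ) := by exact_mod_cast hkblock.1
    have hk2r : (k:ℝ) ≤ 2*(j:ℝ) * m + 2*(j:ℝ) := by
      have := hkblock.2
      push_cast
      exact_mod_cast le_of_lt (by exact_mod_cast this)
    have habs : (1/4 : ℝ) ≤ |e ((j:ℤ), k) ω| := by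
      have hx : e ((j:ℤ), k) ω ∉ Iq := hkout
      rw [Iq, Set.mem_Ioo, not_and_or, not_lt, not_lt] at hx
      rcases hx with hx | hx
      · exact le_abs.2 (Or.inr (by linarith))
      · exact le_abs.2 (Or.inl hx)
    have hcond : |s - c * (k:ℝ)| ≤ (j:ℝ) * (2:ℝ) ^ (1 - (j:ℤ)) := by
      have hrw : s - c * (k:ℝ) = c * (s * t - (k:ℝ)) := by
        linear_combination (-s) * hct
      have hk_abs : |s * t - (k:ℝ)| ≤ 2*(j:ℝ) :=
        abs_le.2 ⟨by linarith, by linarith⟩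
      have h2pow : (2:ℝ) ^ (1 - (j:ℤ)) = 2 * c := by
        rw [hc, sub_eq_add_neg, zpow_add₀ (by norm_num : (2:ℝ) ≠ 0), zpow_one]
      calc |s - c * (k:ℝ)| = c * |s * t - (k:ℝ)| := by
            rw [hrw, abs_mul, abs_of_pos hc0]
        _ ≤ c * (2*(j:ℝ)) := by
            exact mul_le_mul_of_nonneg_left hk_abs hc0.le
        _ = (j:ℝ) * (2:ℝ) ^ (1 - (j:ℤ)) := by rw [h2pow]; ring
    -- now conclude via sSup
    show (1/4 : ℝ) ≤ sSup {x : ℝ | ∃ k : ℤ,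
      |s - (2:ℝ) ^ (-(j : ℤ)) * (k : ℝ)| ≤ (j : ℝ) * (2:ℝ) ^ (1 - (j : ℤ))
      ∧ x = |e ((j : ℤ), k) ω|}
    set d : ℝ := (j:ℝ) * (2:ℝ) ^ (1 - (j:ℤ)) with hd
    have hd0 : (0:ℝ) ≤ d := by positivity
    set K : ℤ := ⌈(|s| + d) * t⌉ with hK
    have hsub : {x : ℝ | ∃ k : ℤ,
        |s - (2:ℝ) ^ (-(j : ℤ)) * (k : ℝ)| ≤ (j : ℝ) * (2:ℝ) ^ (1 - (j : ℤ))
        ∧ x = |e ((j : ℤ), k) ω|}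
        ⊆ (fun k : ℤ => |e ((j:ℤ), k) ω|) '' Set.Icc (-K) K := by
      rintro x ⟨k', hk', rfl⟩
      refine ⟨k', ?_, rfl⟩
      rw [Set.mem_Icc]
      have h1 : |c * (k':ℝ)| ≤ |s| + d := by
        have : c * (k':ℝ) = s - (s - c * (k':ℝ)) := by ring
        rw [this]
        calc |s - (s - c * (k':ℝ))| ≤ |s| + |s - c * (k':ℝ)| := abs_sub _ _
          _ ≤ |s| + d := by exact add_le_add_right hk' _
      have h2 : |(k':ℝ)| ≤ (|s| + d) * t := by
        have h3 : c * |(k':ℝ)| ≤ |s| + d := by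
          rw [← abs_of_pos hc0, ← abs_mul]; exact h1
        calc |(k':ℝ)| = (c * |(k':ℝ)|) * t := by
              rw [mul_comm c, mul_assoc, hct, mul_one]
          _ ≤ (|s| + d) * t := mul_le_mul_of_nonneg_right h3 ht0.le
      have hceil := Int.le_ceil ((|s| + d) * t)
      rw [← hK] at hceil
      have hub : (k':ℝ) ≤ ((K:ℤ):ℝ) := by
        have := le_abs_self (k':ℝ); linarith
      have hlb : ((-K : ℤ):ℝ) ≤ (k':ℝ) := by
        rw [Int.cast_neg]
        have := neg_abs_le (k':ℝ); linarith
      exact ⟨by exact_mod_cast hlb, by exact_mod_cast hub⟩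
    have hbdd : BddAbove {x : ℝ | ∃ k : ℤ,
        |s - (2:ℝ) ^ (-(j : ℤ)) * (k : ℝ)| ≤ (j : ℝ) * (2:ℝ) ^ (1 - (j : ℤ))
        ∧ x = |e ((j : ℤ), k) ω|} :=
      (((Set.finite_Icc (-K) K).image _).bddAbove).mono hsub
    have hmemS : |e ((j:ℤ), k) ω| ∈ {x : ℝ | ∃ k : ℤ,
        |s - (2:ℝ) ^ (-(j : ℤ)) * (k : ℝ)| ≤ (j : ℝ) * (2:ℝ) ^ (1 - (j : ℤ))
        ∧ x = |e ((j : ℤ), k) ω|} := ⟨k, by rw [← hc]; exact hcond, rfl⟩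
    exact le_trans habs (le_csSup hbdd hmemS)

end
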